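/- The coefficients μ_n satisfy: μ_0 = 1, μ_1 = Q/([ν+1]_q [ν+2]_q), and for every n ≥ 2, Q^{−1}·[ν+1]_q·[ν+n+1]_q·μ_n = ∑_{k=2}^{n−1} Q q^k μ_{k−1} μ_{n−k} + (1 + Q q^n) μ_{n−1} in K. -/

import Mathlib

/- Let `K` be the fraction field of `ℚ[q,Q]`, where `Q` plays the role of `q^ν`.
`θν` and `θν1` are the series `θ_ν` and `θ_{ν+1}` of the Hahn–Exton `q`-Bessel
functions, and `μ n` are the coefficients of `θ_{ν+1}/θ_ν`. -/

noncomputable section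

abbrev K : Type := FractionRing (MvPolynomial (Fin 2) ℚ)

def qv : K := algebraMap (MvPolynomial (Fin 2) ℚ) K (MvPolynomial.X 0)

def Qv : K := algebraMap (MvPolynomial (Fin 2) ℚ) K (MvPolynomial.X 1)

/-- The q-Pochhammer symbol `(a;q)_n`. -/
def qPoch (a : K) (n : ℕ) : K := ∏ j ∈ Finset.range n, (1 - a * qv ^ j)

/-- `[ν+k]_q = (1 - Q q^k)/(1-q)`. -/
def brk (k : ℕ) : K := (1 - Qv * qv ^ k) / (1 - qv)

/-- `[ν]_q = (1 - Q)/(1-q)`. -/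
def brNu : K := (1 - Qv) / (1 - qv)

/-- `θ_ν(x)`. -/
def θν : PowerSeries K :=
  PowerSeries.mk fun n =>
    (-1) ^ n * qv ^ (n * (n - 1) / 2) * Qv ^ n * (1 - qv) ^ (2 * n)
      / (qPoch qv n * qPoch (Qv * qv) n)

/-- `θ_{ν+1}(x)`, i.e. `θ_ν` with `Q` replaced by `Qq`. -/
def θν1 : PowerSeries K :=
  PowerSeries.mk fun n =>
    (-1) ^ n * qv ^ (n * (n - 1) / 2) * (Qv * qv) ^ n * (1 - qv) ^ (2 * n)
      / (qPoch qv n * qPoch (Qv * qv ^ 2) n)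

/-- The coefficients `μ_n` of `θ_{ν+1}(x)/θ_ν(x)`. -/
def μ (n : ℕ) : K := PowerSeries.coeff n (θν1 * θν⁻¹)

/- With `c = Q(1-q)²/(1-Qq)`, the series satisfy the contiguous relations
`θ_ν(qx) = θ_ν(x) + c x θ_{ν+1}(x)` and `θ_{ν+1}(x) = Qq θ_{ν+1}(qx) + (1-Qq) θ_ν(qx)`.
Eliminating `θ_ν(qx)`, the quotient `M = θ_{ν+1}/θ_ν` satisfies the `q`-Riccati equation
`M = R + c x R M` with `R(x) = Qq M(qx) + 1 - Qq`, and comparing coefficients of `x^(n+1)` gives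
`(1 - Q q^(n+2)) μ_(n+1) = c (Qq ∑_(i+j=n) q^i μ_i μ_j + (1-Qq) μ_n)`; the extreme terms
`i = 0, n` of the sum combine with the last term into `(1 + Q q^(n+1)) μ_n`. -/

open PowerSeries Finset

theorem Finset.Nat.sum_antidiagonal_succ_eq_ends_add_sum_Icc {M : Type*} [AddCommMonoid M]
    (f : ℕ → ℕ → M) (m : ℕ) :
    ∑ p ∈ antidiagonal (m + 1), f p.1 p.2
      = f 0 (m + 1) + f (m + 1) 0 + ∑ k ∈ Icc 2 (m + 1), f (k - 1) (m + 2 - k) := by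
  rw [Nat.sum_antidiagonal_eq_sum_range_succ f, sum_range_succ, sum_range_succ',
    ← Ico_add_one_right_eq_Icc, sum_Ico_eq_sum_range, show m + 1 + 1 - 2 = m by omega,
    sum_congr rfl fun k _ => show f (k + 1) (m + 1 - (k + 1)) = f (2 + k - 1) (m + 2 - (2 + k))
      by congr 1 <;> omega, Nat.sub_zero, Nat.sub_self]
  abel

namespace PowerSeries

variable {R : Type*} [CommRing R]

theorem constantCoeff_rescale (q : R) (f : R⟦X⟧) :
    constantCoeff (rescale q f) = constantCoeff f := by
  rw [← coeff_zero_eq_constantCoeff_apply, ← coeff_zero_eq_constantCoeff_apply, coeff_rescale,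
    pow_zero, one_mul]

/- `C a * rescale q M + C b` is `G(x)/F(qx)`, so both sides become `G + c x M G` after
multiplying by `F(qx)`. -/
theorem eq_riccati_of_contiguous [IsDomain R] {q a b c : R} {F G M : R⟦X⟧}
    (hF : constantCoeff F ≠ 0) (hM : M * F = G)
    (hFq : rescale q F = F + C c * X * G)
    (hG : G = C a * rescale q G + C b * rescale q F) :
    M = C a * rescale q M + C b + C c * X * ((C a * rescale q M + C b) * M) := by
  have hFq0 : rescale q F ≠ 0 := fun h => hF (by rw [← constantCoeff_rescale q, h, map_zero])
  refine mul_right_cancel₀ hFq0 ?_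
  have hMq : rescale q M * rescale q F = rescale q G := by rw [← map_mul, hM]
  linear_combination M * hFq + hM - (1 + C c * X * M) * (C a * hMq - hG)

theorem coeff_succ_of_eq_riccati {q a b c : R} {M : R⟦X⟧}
    (hM : M = C a * rescale q M + C b + C c * X * ((C a * rescale q M + C b) * M)) (n : ℕ) :
    coeff (n + 1) M * (1 - a * q ^ (n + 1))
      = c * (a * ∑ p ∈ antidiagonal n, q ^ p.1 * coeff p.1 M * coeff p.2 M + b * coeff n M) := by
  have h := congrArg (coeff (n + 1)) hM
  rw [map_add, map_add, coeff_C_mul, coeff_rescale, coeff_C, if_neg n.succ_ne_zero, mul_assoc,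
    coeff_C_mul, coeff_succ_X_mul, add_mul, map_add, mul_assoc, coeff_C_mul, coeff_C_mul,
    coeff_mul] at h
  simp only [coeff_rescale, mul_assoc] at h ⊢
  linear_combination h

end PowerSeries

theorem algebraMap_ne_zero_of_eval_ne_zero {p : MvPolynomial (Fin 2) ℚ} (v : Fin 2 → ℚ)
    (hp : MvPolynomial.eval v p ≠ 0) :
    algebraMap (MvPolynomial (Fin 2) ℚ) K p ≠ 0 := by
  rw [ne_eq, IsFractionRing.to_map_eq_zero_iff]
  rintro rfl
  exact hp (map_zero _)

theorem Qv_ne_zero : Qv ≠ 0 :=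
  algebraMap_ne_zero_of_eval_ne_zero (fun _ => 1) (by simp)

theorem one_sub_qv_pow_ne_zero {k : ℕ} (hk : k ≠ 0) : 1 - qv ^ k ≠ 0 := by
  have h : 1 - qv ^ k = algebraMap (MvPolynomial (Fin 2) ℚ) K (1 - MvPolynomial.X 0 ^ k) := by
    simp [qv]
  rw [h]
  exact algebraMap_ne_zero_of_eval_ne_zero (fun _ => 0) (by simp [zero_pow hk])

theorem one_sub_Qv_mul_qv_pow_ne_zero (k : ℕ) : 1 - Qv * qv ^ k ≠ 0 := by
  have h : 1 - Qv * qv ^ k = algebraMap (MvPolynomial (Fin 2) ℚ) K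
      (1 - MvPolynomial.X 1 * MvPolynomial.X 0 ^ k) := by
    simp [qv, Qv]
  rw [h]
  exact algebraMap_ne_zero_of_eval_ne_zero (fun _ => 0) (by simp)

theorem qPoch_qv_ne_zero (n : ℕ) : qPoch qv n ≠ 0 :=
  prod_ne_zero_iff.2 fun j _ => by
    simpa only [← pow_succ'] using one_sub_qv_pow_ne_zero j.succ_ne_zero

theorem qPoch_Qv_mul_qv_pow_ne_zero (i n : ℕ) : qPoch (Qv * qv ^ i) n ≠ 0 :=
  prod_ne_zero_iff.2 fun j _ => by
    simpa only [mul_assoc, ← pow_add] using one_sub_Qv_mul_qv_pow_ne_zero (i + j)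

theorem qPoch_succ (a : K) (n : ℕ) : qPoch a (n + 1) = qPoch a n * (1 - a * qv ^ n) :=
  prod_range_succ _ _

theorem qPoch_Qv_mul_qv_succ (n : ℕ) :
    qPoch (Qv * qv) (n + 1) = (1 - Qv * qv) * qPoch (Qv * qv ^ 2) n := by
  rw [qPoch, prod_range_succ', qPoch, mul_comm, pow_zero, mul_one]
  exact congrArg _ (prod_congr rfl fun _ _ => by ring)

theorem constantCoeff_θν : constantCoeff θν = 1 := by
  simp [← coeff_zero_eq_constantCoeff_apply, θν, qPoch]

theorem constantCoeff_θν1 : constantCoeff θν1 = 1 := by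
  simp [← coeff_zero_eq_constantCoeff_apply, θν1, qPoch]

theorem rescale_θν :
    rescale qv θν = θν + C (Qv * (1 - qv) ^ 2 / (1 - Qv * qv)) * X * θν1 := by
  ext (_ | n)
  · simp [θν, qPoch]
  · rw [coeff_rescale, map_add, mul_assoc, coeff_C_mul, coeff_succ_X_mul]
    simp only [θν, θν1, coeff_mk]
    rw [Nat.triangle_succ, qPoch_succ, qPoch_Qv_mul_qv_succ, pow_add, pow_succ (-1 : K),
      pow_succ Qv, mul_add, mul_one, pow_add (1 - qv)]
    have h₁ := qPoch_qv_ne_zero n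
    have h₂ := qPoch_Qv_mul_qv_pow_ne_zero 2 n
    generalize qPoch qv n = P at *
    generalize qPoch (Qv * qv ^ 2) n = P₂ at *
    have h₃ : 1 - qv ^ n * qv ≠ 0 := by
      simpa only [← pow_succ] using one_sub_qv_pow_ne_zero n.succ_ne_zero
    have h₄ : 1 - qv * Qv ≠ 0 := by simpa [mul_comm] using one_sub_Qv_mul_qv_pow_ne_zero 1
    field_simp
    ring

theorem θν1_eq : θν1 = C (Qv * qv) * rescale qv θν1 + C (1 - Qv * qv) * rescale qv θν := by
  ext n
  simp only [map_add, coeff_C_mul, coeff_rescale, θν, θν1, coeff_mk]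
  have h₁ := qPoch_qv_ne_zero n
  have h₂ := qPoch_Qv_mul_qv_pow_ne_zero 1 n
  have h₃ := qPoch_Qv_mul_qv_pow_ne_zero 2 n
  have hsucc :
      qPoch (Qv * qv) n * (1 - Qv * qv * qv ^ n) = (1 - Qv * qv) * qPoch (Qv * qv ^ 2) n := by
    rw [← qPoch_succ, qPoch_Qv_mul_qv_succ]
  rw [pow_one] at h₂
  field_simp
  linear_combination (qv ^ (n * (n - 1) / 2) * (1 - qv) ^ (2 * n) * Qv ^ n * qv ^ n) * hsucc

theorem μ_zero : μ 0 = 1 := by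
  rw [μ, coeff_zero_eq_constantCoeff_apply, map_mul, constantCoeff_θν1, constantCoeff_inv,
    constantCoeff_θν, inv_one, mul_one]

theorem μ_succ_mul (n : ℕ) :
    μ (n + 1) * (1 - Qv * qv * qv ^ (n + 1))
      = Qv * (1 - qv) ^ 2 / (1 - Qv * qv)
        * (Qv * qv * ∑ p ∈ antidiagonal n, qv ^ p.1 * μ p.1 * μ p.2 + (1 - Qv * qv) * μ n) := by
  have hθν : constantCoeff θν ≠ 0 := by rw [constantCoeff_θν]; exact one_ne_zero
  refine coeff_succ_of_eq_riccati (eq_riccati_of_contiguous hθν ?_ rescale_θν θν1_eq) n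
  rw [mul_assoc, PowerSeries.inv_mul_cancel _ hθν, mul_one]

/-- Proposition 2.1: the recurrence for the coefficients `μ_n`. -/
theorem mu_recurrence :
    μ 0 = 1 ∧ μ 1 = Qv / (brk 1 * brk 2) ∧
      ∀ n : ℕ, 2 ≤ n →
        Qv⁻¹ * brk 1 * brk (n + 1) * μ n
          = (∑ k ∈ Finset.Icc 2 (n - 1), Qv * qv ^ k * μ (k - 1) * μ (n - k))
            + (1 + Qv * qv ^ n) * μ (n - 1) := by
  have hQ := Qv_ne_zero
  have hq : 1 - qv ≠ 0 := by simpa using one_sub_qv_pow_ne_zero one_ne_zero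
  have hQq : 1 - Qv * qv ≠ 0 := by simpa using one_sub_Qv_mul_qv_pow_ne_zero 1
  refine ⟨μ_zero, ?_, fun n hn => ?_⟩
  · have h := μ_succ_mul 0
    rw [Nat.antidiagonal_zero, sum_singleton, μ_zero] at h
    have hQq2 := one_sub_Qv_mul_qv_pow_ne_zero 2
    rw [brk, brk, pow_one]
    field_simp at h ⊢
    linear_combination h
  · obtain ⟨m, rfl⟩ : ∃ m, n = m + 2 := ⟨n - 2, by omega⟩
    have h := μ_succ_mul (m + 1)
    rw [Nat.sum_antidiagonal_succ_eq_ends_add_sum_Icc (fun i j => qv ^ i * μ i * μ j), μ_zero] at h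
    have hsum : ∑ k ∈ Icc 2 (m + 1), Qv * qv ^ k * μ (k - 1) * μ (m + 2 - k)
        = Qv * qv * ∑ k ∈ Icc 2 (m + 1), qv ^ (k - 1) * μ (k - 1) * μ (m + 2 - k) := by
      rw [mul_sum]
      refine sum_congr rfl fun k hk => ?_
      rw [← pow_sub_one_mul (by have := (mem_Icc.1 hk).1; omega)]
      ring
    rw [show m + 2 - 1 = m + 1 from rfl, hsum, brk, brk]
    field_simp at h ⊢
    linear_combination h

end
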